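/- arXiv:1809.01643 — 4 statements merged into one kernel-verified Lean document; each statement's English description precedes it below -/
import Mathlib

section
/- Under the difference-in-differences identification assumptions (observational rule, common support, no anticipation, conditional common trends), for every x in the support of X the conditional average treatment effect on the treated satisfies E[Y^1(1) - Y^0(1) | D=1, T=1, X=x] = m_Y(1,1,x) - m_Y(1,0,x) - m_Y(0,1,x) + m_Y(0,0,x), where m_Y(d,t,x) = E[Y | D=d, T=t, X=x]. -/
open MeasureTheory

/-- Conditional expectation of `f` given the event `A`. -/
noncomputable def cexp {Ω : Type*} [MeasurableSpace Ω] (μ : Measure Ω) (f : Ω → ℝ)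
    (A : Set Ω) : ℝ :=
  (∫ ω in A, f ω ∂μ) / (μ A).toReal

/-- The event `{D = d, T = t, X = x}`. -/
def Ev {Ω 𝒳 : Type*} (D T : Ω → Bool) (X : Ω → 𝒳) (d t : Bool) (x : 𝒳) : Set Ω :=
  {ω | D ω = d ∧ T ω = t ∧ X ω = x}

/-! On each cell `{D = d, T = t, X = x}` the observed outcome is the potential outcome `Y^d(t)`,
so each `m_Y(d,t,x)` is a conditional mean of a potential outcome. No anticipation equates the
means of `Y^1(0)` and `Y^0(0)` on the treated pre-period cell, and common trends expresses the
unobserved mean of `Y^0(1)` on the treated post-period cell through the other three cells. -/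

section cexp

variable {Ω : Type*} [MeasurableSpace Ω] (μ : Measure Ω)

lemma cexp_sub {f g : Ω → ℝ} {A : Set Ω} (hf : IntegrableOn f A μ) (hg : IntegrableOn g A μ) :
    cexp μ (fun ω => f ω - g ω) A = cexp μ f A - cexp μ g A := by
  rw [cexp, cexp, cexp, integral_sub hf hg, sub_div]

/-- No measurability of `A` is needed: the integrability of `f - g` does the work. -/
lemma cexp_congr {f g : Ω → ℝ} {A : Set Ω} (hf : IntegrableOn f A μ) (hg : IntegrableOn g A μ)
    (hfg : Set.EqOn f g A) : cexp μ f A = cexp μ g A := by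
  have hzero : ∫ ω in A, (f ω - g ω) ∂μ = 0 :=
    setIntegral_eq_zero_of_forall_eq_zero fun ω hω => sub_eq_zero.mpr (hfg hω)
  rw [integral_sub hf hg, sub_eq_zero] at hzero
  rw [cexp, cexp, hzero]

end cexp

lemma cexp_Ev_eq_cexp_potentialOutcome {Ω 𝒳 : Type*} [MeasurableSpace Ω] (μ : Measure Ω)
    {Y : Ω → ℝ} {D T : Ω → Bool} {X : Ω → 𝒳} {PO : Bool → Bool → Ω → ℝ}
    (hYint : Integrable Y μ) (hPOint : ∀ d t, Integrable (PO d t) μ)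
    (hObs : ∀ ω, Y ω = PO (D ω) (T ω) ω) (d t : Bool) (x : 𝒳) :
    cexp μ Y (Ev D T X d t x) = cexp μ (PO d t) (Ev D T X d t x) :=
  cexp_congr μ hYint.integrableOn (hPOint d t).integrableOn fun ω ⟨hD, hT, _⟩ => by
    rw [hObs ω, hD, hT]

theorem did_conditional_atet_identification_general
    {Ω 𝒳 : Type*} [MeasurableSpace Ω]
    (μ : Measure Ω)
    (Y : Ω → ℝ) (D T : Ω → Bool) (X : Ω → 𝒳)
    (PO : Bool → Bool → Ω → ℝ)  -- potential outcomes: `PO d t = Y^d(t)`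
    (hYint : Integrable Y μ) (hPOint : ∀ d t, Integrable (PO d t) μ)
    -- (i) observational rule
    (hObs : ∀ ω, Y ω = PO (D ω) (T ω) ω)
    -- (iii) no anticipation
    (hNA : ∀ x, 0 < μ {ω | X ω = x} →
      cexp μ (fun ω => PO true false ω - PO false false ω) (Ev D T X true false x) = 0)
    -- (iv) conditional common trends
    (hCT : ∀ x, 0 < μ {ω | X ω = x} →
      cexp μ (PO false true) (Ev D T X false true x)
        - cexp μ (PO false false) (Ev D T X false false x)
      = cexp μ (PO false true) (Ev D T X true true x)
        - cexp μ (PO false false) (Ev D T X true false x)) :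
    ∀ x, 0 < μ {ω | X ω = x} →
      cexp μ (fun ω => PO true true ω - PO false true ω) (Ev D T X true true x)
        = cexp μ Y (Ev D T X true true x) - cexp μ Y (Ev D T X true false x)
          - cexp μ Y (Ev D T X false true x) + cexp μ Y (Ev D T X false false x) := by
  intro x hx
  have hPO (d t : Bool) {A : Set Ω} : IntegrableOn (PO d t) A μ := (hPOint d t).integrableOn
  have hNA' := hNA x hx
  rw [cexp_sub μ (hPO true false) (hPO false false)] at hNA'
  simp only [cexp_Ev_eq_cexp_potentialOutcome μ hYint hPOint hObs,
    cexp_sub μ (hPO true true) (hPO false true)]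
  linarith [hCT x hx]

/-- Under the DiD identification assumptions (observational rule, common
support, no anticipation, conditional common trends), for every `x` in the support of `X`,
`E[Y¹(1) - Y⁰(1) | D=1, T=1, X=x] = m_Y(1,1,x) - m_Y(1,0,x) - m_Y(0,1,x) + m_Y(0,0,x)`. -/
theorem did_conditional_atet_identification
    {Ω 𝒳 : Type*} [MeasurableSpace Ω]
    (μ : Measure Ω) [IsProbabilityMeasure μ]
    (Y : Ω → ℝ) (D T : Ω → Bool) (X : Ω → 𝒳)
    (PO : Bool → Bool → Ω → ℝ)  -- potential outcomes: `PO d t = Y^d(t)`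
    (hYint : Integrable Y μ) (hPOint : ∀ d t, Integrable (PO d t) μ)
    -- (i) observational rule
    (hObs : ∀ ω, Y ω = PO (D ω) (T ω) ω)
    -- (ii) common support
    (hCS : ∀ d t x, 0 < μ {ω | X ω = x} → 0 < μ (Ev D T X d t x))
    -- (iii) no anticipation
    (hNA : ∀ x, 0 < μ {ω | X ω = x} →
      cexp μ (fun ω => PO true false ω - PO false false ω) (Ev D T X true false x) = 0)
    -- (iv) conditional common trends
    (hCT : ∀ x, 0 < μ {ω | X ω = x} →
      cexp μ (PO false true) (Ev D T X false true x)
        - cexp μ (PO false false) (Ev D T X false false x)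
      = cexp μ (PO false true) (Ev D T X true true x)
        - cexp μ (PO false false) (Ev D T X true false x)) :
    ∀ x, 0 < μ {ω | X ω = x} →
      cexp μ (fun ω => PO true true ω - PO false true ω) (Ev D T X true true x)
        = cexp μ Y (Ev D T X true true x) - cexp μ Y (Ev D T X true false x)
          - cexp μ Y (Ev D T X false true x) + cexp μ Y (Ev D T X false false x) :=
  did_conditional_atet_identification_general μ Y D T X PO hYint hPOint hObs hNA hCT
end

section
/- The efficient influence function for the cross-sectional fully robust case has mean zero: E[ (p_{D=1,T=1}(X)/p_{DT}) * sum_{d,t} (-1)^{d+t} (1{D=d,T=t}/p_{D=d,T=t}(X)) (Y - m_Y(d,t,X)) + (D T / p_{DT}) (m_Y(X) - theta) ] = 0, where theta = E[ m_Y(X) p_{D=1,T=1}(X) ] / p_{DT}. -/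
open MeasureTheory

/-- `p_{D=d,T=t}(x) = Pr(D=d, T=t | X=x)`. -/
noncomputable def pDTx {Ω 𝒳 : Type*} [MeasurableSpace Ω] (μ : Measure Ω)
    (D T : Ω → Bool) (X : Ω → 𝒳) (d t : Bool) (x : 𝒳) : ℝ :=
  (μ (Ev D T X d t x)).toReal / (μ {ω | X ω = x}).toReal

/-- `m_Y(d,t,x) = E[Y | D=d, T=t, X=x]`. -/
noncomputable def mY {Ω 𝒳 : Type*} [MeasurableSpace Ω] (μ : Measure Ω) (Y : Ω → ℝ)
    (D T : Ω → Bool) (X : Ω → 𝒳) (d t : Bool) (x : 𝒳) : ℝ :=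
  cexp μ Y (Ev D T X d t x)

/-- `m_Y(x) = Σ_{d,t} (-1)^{d+t} m_Y(d,t,x)`. -/
noncomputable def mYx {Ω 𝒳 : Type*} [MeasurableSpace Ω] (μ : Measure Ω) (Y : Ω → ℝ)
    (D T : Ω → Bool) (X : Ω → 𝒳) (x : 𝒳) : ℝ :=
  mY μ Y D T X true true x - mY μ Y D T X true false x
    - mY μ Y D T X false true x + mY μ Y D T X false false x

/-- Indicator `1{D=d, T=t}`. -/
def indDT {Ω : Type*} (D T : Ω → Bool) (d t : Bool) (ω : Ω) : ℝ :=
  if D ω = d ∧ T ω = t then 1 else 0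

/-! Write `Z = (X, D, T)`, a random variable with finitely many values. The integrand is
`u(Z) (Y - m_Y(D, T, X)) + 1{D=1,T=1} (m_Y(X) - θ) / p_DT` with
`u(x, d, t) = (-1)^(d+t) p_{D=1,T=1}(x) / (p_DT p_{D=d,T=t}(x))`.
Since `m_Y(d, t, x)` is the mean of `Y` on the cell `{Z = (x, d, t)}`, the first part integrates
to zero cell by cell. By the tower property `E[1{D=1,T=1} g(X)] = E[p_{D=1,T=1}(X) g(X)]`, the
second part has mean `(E[m_Y(X) p_{D=1,T=1}(X)] - θ p_DT) / p_DT`, which vanishes by the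
definition of `θ`. -/

open Finset

section FiniteRange

variable {Ω 𝒵 : Type*} [MeasurableSpace Ω] [MeasurableSpace 𝒵] [MeasurableSingletonClass 𝒵]
  {μ : Measure Ω} {Z : Ω → 𝒵} {S : Finset 𝒵}

theorem measurable_comp_of_forall_mem (hZ : Measurable Z) (hS : ∀ ω, Z ω ∈ S) (v : 𝒵 → ℝ) :
    Measurable fun ω => v (Z ω) :=
  (measurable_of_countable fun z : S => v z).comp (hZ.subtype_mk (h := hS))

omit [MeasurableSpace Ω] [MeasurableSpace 𝒵] [MeasurableSingletonClass 𝒵] in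
theorem norm_comp_le_sum (hS : ∀ ω, Z ω ∈ S) (v : 𝒵 → ℝ) (ω : Ω) :
    ‖v (Z ω)‖ ≤ ∑ z ∈ S, ‖v z‖ :=
  single_le_sum (f := fun z => ‖v z‖) (fun _ _ => norm_nonneg _) (hS ω)

theorem integrable_comp_of_forall_mem [IsFiniteMeasure μ] (hZ : Measurable Z)
    (hS : ∀ ω, Z ω ∈ S) (v : 𝒵 → ℝ) : Integrable (fun ω => v (Z ω)) μ :=
  .of_bound (measurable_comp_of_forall_mem hZ hS v).aestronglyMeasurable _
    (ae_of_all _ (norm_comp_le_sum hS v))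

theorem integral_eq_sum_setIntegral_preimage {E : Type*} [NormedAddCommGroup E]
    [NormedSpace ℝ E] (hZ : Measurable Z) (hS : ∀ ω, Z ω ∈ S) {g : Ω → E}
    (hg : Integrable g μ) : ∫ ω, g ω ∂μ = ∑ z ∈ S, ∫ ω in Z ⁻¹' {z}, g ω ∂μ := by
  have hcover : ⋃ z ∈ S, Z ⁻¹' {z} = Set.univ :=
    Set.eq_univ_of_forall fun ω => Set.mem_biUnion (hS ω) rfl
  rw [← integral_biUnion_finset S (fun z _ => hZ (measurableSet_singleton z))
    (fun z _ z' _ hzz' => Set.disjoint_singleton.2 hzz' |>.preimage Z)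
    (fun z _ => hg.integrableOn), hcover, setIntegral_univ]

theorem integral_comp_eq_sum [IsFiniteMeasure μ] (hZ : Measurable Z) (hS : ∀ ω, Z ω ∈ S)
    (v : 𝒵 → ℝ) : ∫ ω, v (Z ω) ∂μ = ∑ z ∈ S, μ.real (Z ⁻¹' {z}) * v z := by
  rw [integral_eq_sum_setIntegral_preimage hZ hS (integrable_comp_of_forall_mem hZ hS v)]
  refine sum_congr rfl fun z _ => ?_
  rw [setIntegral_congr_fun (hZ (measurableSet_singleton z)) fun ω (hω : Z ω = z) => by
    rw [hω], setIntegral_const, smul_eq_mul]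

theorem div_measureReal_mul_cancel {A : Set Ω} (hA : μ A ≠ ⊤) {a : ℝ} (ha : μ A = 0 → a = 0) :
    a / μ.real A * μ.real A = a := by
  by_cases h : μ A = 0
  · simp [ha h]
  · exact div_mul_cancel₀ a (ENNReal.toReal_ne_zero.2 ⟨h, hA⟩)

theorem cexp_mul_measureReal [IsFiniteMeasure μ] (Y : Ω → ℝ) (A : Set Ω) :
    cexp μ Y A * μ.real A = ∫ ω in A, Y ω ∂μ :=
  div_measureReal_mul_cancel (measure_ne_top μ A) fun h => by simp [Measure.restrict_eq_zero.2 h]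

theorem integrable_comp_mul_sub_cexp [IsFiniteMeasure μ] (hZ : Measurable Z)
    (hS : ∀ ω, Z ω ∈ S) {Y : Ω → ℝ} (hY : Integrable Y μ) (u : 𝒵 → ℝ) :
    Integrable (fun ω => u (Z ω) * (Y ω - cexp μ Y (Z ⁻¹' {Z ω}))) μ := by
  simp_rw [mul_sub]
  exact (hY.bdd_mul (measurable_comp_of_forall_mem hZ hS u).aestronglyMeasurable
    (ae_of_all _ (norm_comp_le_sum hS u))).sub
    (integrable_comp_of_forall_mem hZ hS fun z => u z * cexp μ Y (Z ⁻¹' {z}))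

theorem integral_comp_mul_sub_cexp_eq_zero [IsFiniteMeasure μ] (hZ : Measurable Z)
    (hS : ∀ ω, Z ω ∈ S) {Y : Ω → ℝ} (hY : Integrable Y μ) (u : 𝒵 → ℝ) :
    ∫ ω, u (Z ω) * (Y ω - cexp μ Y (Z ⁻¹' {Z ω})) ∂μ = 0 := by
  rw [integral_eq_sum_setIntegral_preimage hZ hS (integrable_comp_mul_sub_cexp hZ hS hY u)]
  refine sum_eq_zero fun z _ => ?_
  rw [setIntegral_congr_fun (hZ (measurableSet_singleton z)) fun ω (hω : Z ω = z) => by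
      rw [hω],
    integral_const_mul, integral_sub hY.integrableOn (integrable_const _), setIntegral_const,
    smul_eq_mul, mul_comm (μ.real _), cexp_mul_measureReal, sub_self, mul_zero]

end FiniteRange

section CrossSection

variable {Ω 𝒳 : Type*} {D T : Ω → Bool} {X : Ω → 𝒳}

theorem indDT_mul_eq_indicator (d t : Bool) (g : Ω → ℝ) (ω : Ω) :
    indDT D T d t ω * g ω = {ω | D ω = d ∧ T ω = t}.indicator g ω := by
  by_cases h : D ω = d ∧ T ω = t <;> simp [indDT, h]

theorem preimage_prodMk_eq_Ev (d t : Bool) (x : 𝒳) :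
    (fun ω => (X ω, D ω, T ω)) ⁻¹' {(x, d, t)} = Ev D T X d t x := by
  ext ω
  simp only [Set.mem_preimage, Set.mem_singleton_iff, Prod.mk.injEq, Ev, Set.mem_ofPred_eq]
  tauto

variable [MeasurableSpace Ω] {μ : Measure Ω} [IsFiniteMeasure μ]

theorem pDTx_mul_measureReal (d t : Bool) (x : 𝒳) :
    pDTx μ D T X d t x * μ.real (X ⁻¹' {x}) = μ.real (Ev D T X d t x) :=
  div_measureReal_mul_cancel (measure_ne_top μ _) fun h =>
    measureReal_mono_null (fun _ hω => hω.2.2) ((measureReal_eq_zero_iff (measure_ne_top μ _)).2 h)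

variable [MeasurableSpace 𝒳] [MeasurableSingletonClass 𝒳] {S : Finset 𝒳}

theorem integral_indDT_mul_comp (hD : Measurable D) (hT : Measurable T) (hX : Measurable X)
    (hS : ∀ ω, X ω ∈ S) (d t : Bool) (g : 𝒳 → ℝ) :
    ∫ ω, indDT D T d t ω * g (X ω) ∂μ = ∫ ω, pDTx μ D T X d t (X ω) * g (X ω) ∂μ := by
  have hA : MeasurableSet {ω | D ω = d ∧ T ω = t} :=
    (hD (measurableSet_singleton d)).inter (hT (measurableSet_singleton t))
  simp_rw [indDT_mul_eq_indicator d t (fun ω => g (X ω))]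
  rw [integral_indicator hA, integral_comp_eq_sum hX hS,
    integral_comp_eq_sum hX hS fun x => pDTx μ D T X d t x * g x]
  refine Finset.sum_congr rfl fun x _ => ?_
  rw [measureReal_restrict_apply (hX (measurableSet_singleton x)), ← mul_assoc,
    mul_comm (μ.real (X ⁻¹' {x})), pDTx_mul_measureReal]
  congr 2
  ext ω
  simp only [Ev, Set.mem_inter_iff, Set.mem_preimage, Set.mem_singleton_iff, Set.mem_ofPred_eq]
  tauto

theorem integral_pDTx (hD : Measurable D) (hT : Measurable T) (hX : Measurable X)
    (hS : ∀ ω, X ω ∈ S) (d t : Bool) :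
    ∫ ω, pDTx μ D T X d t (X ω) ∂μ = μ.real {ω | D ω = d ∧ T ω = t} := by
  calc ∫ ω, pDTx μ D T X d t (X ω) ∂μ = ∫ ω, indDT D T d t ω * 1 ∂μ := by
        simpa using (integral_indDT_mul_comp hD hT hX hS d t fun _ => 1).symm
    _ = μ.real {ω | D ω = d ∧ T ω = t} :=
        (integral_congr_ae (ae_of_all _ (indDT_mul_eq_indicator d t 1))).trans
          (integral_indicator_one
            ((hD (measurableSet_singleton d)).inter (hT (measurableSet_singleton t))))

end CrossSection

theorem eif_CS1_mean_zero_general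
    {Ω 𝒳 : Type*} [MeasurableSpace Ω] [MeasurableSpace 𝒳] [MeasurableSingletonClass 𝒳]
    (μ : Measure Ω) [IsProbabilityMeasure μ]
    (Y : Ω → ℝ) (D T : Ω → Bool) (X : Ω → 𝒳)
    (hD : Measurable D) (hT : Measurable T) (hX : Measurable X)
    (hXfin : (Set.range X).Finite)
    (hYint : Integrable Y μ)
    (pDT : ℝ) (hpDT : pDT = (μ {ω | D ω = true ∧ T ω = true}).toReal)
    (θ : ℝ) (hθ : θ = (∫ ω, mYx μ Y D T X (X ω) * pDTx μ D T X true true (X ω) ∂μ) / pDT) :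
    ∫ ω,
        (pDTx μ D T X true true (X ω) / pDT)
          * (indDT D T true true ω / pDTx μ D T X true true (X ω)
              * (Y ω - mY μ Y D T X true true (X ω))
            - indDT D T true false ω / pDTx μ D T X true false (X ω)
              * (Y ω - mY μ Y D T X true false (X ω))
            - indDT D T false true ω / pDTx μ D T X false true (X ω)
              * (Y ω - mY μ Y D T X false true (X ω))
            + indDT D T false false ω / pDTx μ D T X false false (X ω)
              * (Y ω - mY μ Y D T X false false (X ω)))
        + (indDT D T true true ω / pDT) * (mYx μ Y D T X (X ω) - θ) ∂μ = 0 := by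
  set Z : Ω → 𝒳 × Bool × Bool := fun ω => (X ω, D ω, T ω)
  have hZ : Measurable Z := hX.prodMk (hD.prodMk hT)
  have hXS : ∀ ω, X ω ∈ hXfin.toFinset := fun ω => hXfin.mem_toFinset.2 ⟨ω, rfl⟩
  have hZS : ∀ ω, Z ω ∈ hXfin.toFinset ×ˢ Finset.univ := fun ω =>
    Finset.mem_product.2 ⟨hXS ω, Finset.mem_univ _⟩
  let u : 𝒳 × Bool × Bool → ℝ := fun z =>
    (if z.2.1 = z.2.2 then 1 else -1) * (pDTx μ D T X true true z.1 / pDT)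
      / pDTx μ D T X z.2.1 z.2.2 z.1
  let g : 𝒳 → ℝ := fun x => (mYx μ Y D T X x - θ) / pDT
  calc _ = ∫ ω, u (Z ω) * (Y ω - cexp μ Y (Z ⁻¹' {Z ω})) + indDT D T true true ω * g (X ω) ∂μ := by
        congr 1; funext ω
        rw [preimage_prodMk_eq_Ev]
        cases hd : D ω <;> cases ht : T ω <;> simp [u, g, Z, indDT, mY, hd, ht] <;> ring
    _ = ∫ ω, pDTx μ D T X true true (X ω) * g (X ω) ∂μ := by
        have hind : Integrable (fun ω => indDT D T true true ω * g (X ω)) μ :=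
          integrable_comp_of_forall_mem hZ hZS fun z =>
            (if z.2.1 = true ∧ z.2.2 = true then 1 else 0) * g z.1
        rw [integral_add (integrable_comp_mul_sub_cexp hZ hZS hYint u) hind,
          integral_comp_mul_sub_cexp_eq_zero hZ hZS hYint, zero_add,
          integral_indDT_mul_comp hD hT hX hXS]
    _ = ((∫ ω, mYx μ Y D T X (X ω) * pDTx μ D T X true true (X ω) ∂μ)
          - θ * ∫ ω, pDTx μ D T X true true (X ω) ∂μ) / pDT := by
        rw [← integral_const_mul, ← integral_sub
          (integrable_comp_of_forall_mem hX hXS fun x => mYx μ Y D T X x * pDTx μ D T X true true x)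
          ((integrable_comp_of_forall_mem hX hXS (pDTx μ D T X true true)).const_mul θ),
          ← integral_div]
        congr 1; funext ω; simp only [g]; ring
    _ = 0 := by
        rw [integral_pDTx hD hT hX hXS, measureReal_def, ← hpDT]
        rcases eq_or_ne pDT 0 with h | h
        · simp [h]
        · rw [hθ, div_mul_cancel₀ _ h, sub_self, zero_div]

/-- The efficient influence function for the cross-sectional fully robust
case (CS-1) has mean zero, where `θ = E[m_Y(X) p_{D=1,T=1}(X)] / p_{DT}`. -/
theorem eif_CS1_mean_zero
    {Ω 𝒳 : Type*} [MeasurableSpace Ω] [MeasurableSpace 𝒳] [MeasurableSingletonClass 𝒳]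
    (μ : Measure Ω) [IsProbabilityMeasure μ]
    (Y : Ω → ℝ) (D T : Ω → Bool) (X : Ω → 𝒳)
    (hD : Measurable D) (hT : Measurable T) (hX : Measurable X)
    (hXfin : (Set.range X).Finite)
    (hYint : Integrable Y μ)
    -- common support
    (hCS : ∀ d t x, 0 < μ {ω | X ω = x} → 0 < μ (Ev D T X d t x))
    -- p_{DT} = Pr(D=1, T=1) > 0
    (hDT : 0 < μ {ω | D ω = true ∧ T ω = true})
    (pDT : ℝ) (hpDT : pDT = (μ {ω | D ω = true ∧ T ω = true}).toReal)
    (θ : ℝ) (hθ : θ = (∫ ω, mYx μ Y D T X (X ω) * pDTx μ D T X true true (X ω) ∂μ) / pDT) :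
    ∫ ω,
        (pDTx μ D T X true true (X ω) / pDT)
          * (indDT D T true true ω / pDTx μ D T X true true (X ω)
              * (Y ω - mY μ Y D T X true true (X ω))
            - indDT D T true false ω / pDTx μ D T X true false (X ω)
              * (Y ω - mY μ Y D T X true false (X ω))
            - indDT D T false true ω / pDTx μ D T X false true (X ω)
              * (Y ω - mY μ Y D T X false true (X ω))
            + indDT D T false false ω / pDTx μ D T X false false (X ω)
              * (Y ω - mY μ Y D T X false false (X ω)))
        + (indDT D T true true ω / pDT) * (mYx μ Y D T X (X ω) - θ) ∂μ = 0 :=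
  eif_CS1_mean_zero_general μ Y D T X hD hT hX hXfin hYint pDT hpDT θ hθ
end

section
/- The panel efficient influence function has mean zero: under the panel difference-in-differences identification assumptions, E[ (p_D(X)/p_D) ( (D/p_D(X))(ΔY - m_{ΔY}(1,X)) - ((1-D)/(1-p_D(X)))(ΔY - m_{ΔY}(0,X)) ) + (D/p_D)(m_{ΔY}(X) - theta) ] = 0, where ΔY = Y(1) - Y(0), m_{ΔY}(d,x) = E[ΔY | D=d, X=x], m_{ΔY}(x) = m_{ΔY}(1,x) - m_{ΔY}(0,x), and theta = E[ m_{ΔY}(X) p_D(X) ] / p_D. -/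
open MeasureTheory

/-- `Pr(D = 1 | X = x)`. -/
noncomputable def pDx {Ω 𝒳 : Type*} [MeasurableSpace Ω] (μ : Measure Ω)
    (D : Ω → Bool) (X : Ω → 𝒳) (x : 𝒳) : ℝ :=
  (μ {ω | D ω = true ∧ X ω = x}).toReal / (μ {ω | X ω = x}).toReal

/-- `m_{ΔY}(d, x) = E[ΔY | D=d, X=x]`. -/
noncomputable def mDY {Ω 𝒳 : Type*} [MeasurableSpace Ω] (μ : Measure Ω)
    (Y0 Y1 : Ω → ℝ) (D : Ω → Bool) (X : Ω → 𝒳) (d : Bool) (x : 𝒳) : ℝ :=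
  cexp μ (fun ω => Y1 ω - Y0 ω) {ω | D ω = d ∧ X ω = x}

theorem setIntegral_eq_measureReal_mul_cexp {Ω : Type*} [MeasurableSpace Ω] {μ : Measure Ω}
    [IsFiniteMeasure μ] (f : Ω → ℝ) (A : Set Ω) :
    ∫ ω in A, f ω ∂μ = μ.real A * cexp μ f A := by
  rcases eq_or_ne (μ A) 0 with h | h
  · rw [Measure.restrict_eq_zero.2 h, integral_zero_measure, measureReal_def, h,
      ENNReal.toReal_zero, zero_mul]
  · exact (mul_div_cancel₀ _ (ENNReal.toReal_ne_zero.2 ⟨h, measure_ne_top μ A⟩)).symm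

noncomputable def cexpGiven {Ω α : Type*} [MeasurableSpace Ω] (μ : Measure Ω) (f : Ω → ℝ)
    (Z : Ω → α) (ω : Ω) : ℝ :=
  cexp μ f {ω' | Z ω' = Z ω}

section FiniteRange

variable {Ω α : Type*} [MeasurableSpace Ω] [MeasurableSpace α] [MeasurableSingletonClass α]
  {μ : Measure Ω} {Z : Ω → α}

theorem measurable_comp_of_finite_range {β : Type*} [MeasurableSpace β] (hZ : Measurable Z)
    (hZfin : (Set.range Z).Finite) (g : α → β) : Measurable fun ω => g (Z ω) := by
  have : Finite (Set.range Z) := hZfin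
  exact (measurable_of_finite fun z : Set.range Z => g z).comp
    (hZ.subtype_mk (h := Set.mem_range_self))

theorem MeasureTheory.Integrable.comp_mul_of_finite_range (hZ : Measurable Z)
    (hZfin : (Set.range Z).Finite) (g : α → ℝ) {f : Ω → ℝ} (hf : Integrable f μ) :
    Integrable (fun ω => g (Z ω) * f ω) μ := by
  obtain ⟨C, hC⟩ := (hZfin.image fun z => ‖g z‖).bddAbove
  refine hf.bdd_mul (measurable_comp_of_finite_range hZ hZfin g).aestronglyMeasurable
    (c := C) (Filter.Eventually.of_forall fun ω => hC ⟨Z ω, Set.mem_range_self ω, rfl⟩)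

theorem integrable_comp_of_finite_range [IsFiniteMeasure μ] (hZ : Measurable Z)
    (hZfin : (Set.range Z).Finite) (g : α → ℝ) : Integrable (fun ω => g (Z ω)) μ := by
  simpa using Integrable.comp_mul_of_finite_range hZ hZfin g (integrable_const (1 : ℝ))

theorem integral_eq_sum_setIntegral_fiber (hZ : Measurable Z) (hZfin : (Set.range Z).Finite)
    {g : Ω → ℝ} (hg : Integrable g μ) :
    ∫ ω, g ω ∂μ = ∑ z ∈ hZfin.toFinset, ∫ ω in {ω | Z ω = z}, g ω ∂μ := by
  have hcover : ⋃ z ∈ hZfin.toFinset, {ω | Z ω = z} = Set.univ :=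
    Set.eq_univ_of_forall fun ω => Set.mem_biUnion (hZfin.mem_toFinset.2 ⟨ω, rfl⟩) rfl
  rw [← setIntegral_univ, ← hcover]
  refine integral_biUnion_finset _ (fun z _ => hZ (measurableSet_singleton z)) ?_
    (fun z _ => hg.integrableOn)
  intro z _ z' _ hzz'
  exact Set.disjoint_left.2 fun ω (hz : Z ω = z) (hz' : Z ω = z') => hzz' (hz ▸ hz')

variable [IsFiniteMeasure μ]

theorem MeasureTheory.Integrable.sub_cexpGiven (hZ : Measurable Z)
    (hZfin : (Set.range Z).Finite) {f : Ω → ℝ} (hf : Integrable f μ) :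
    Integrable (fun ω => f ω - cexpGiven μ f Z ω) μ :=
  hf.sub (integrable_comp_of_finite_range hZ hZfin fun z => cexp μ f {ω | Z ω = z})

theorem integral_comp_mul_sub_cexpGiven (hZ : Measurable Z) (hZfin : (Set.range Z).Finite)
    {f : Ω → ℝ} (hf : Integrable f μ) (a : α → ℝ) :
    ∫ ω, a (Z ω) * (f ω - cexpGiven μ f Z ω) ∂μ = 0 := by
  rw [integral_eq_sum_setIntegral_fiber hZ hZfin
    ((hf.sub_cexpGiven hZ hZfin).comp_mul_of_finite_range hZ hZfin a)]
  refine Finset.sum_eq_zero fun z _ => ?_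
  have hfiber : Set.EqOn (fun ω => a (Z ω) * (f ω - cexpGiven μ f Z ω))
      (fun ω => a z * (f ω - cexp μ f {ω | Z ω = z})) {ω | Z ω = z} := by
    intro ω (hω : Z ω = z)
    simp only [cexpGiven, hω]
  have hmeas : MeasurableSet {ω | Z ω = z} := hZ (measurableSet_singleton z)
  rw [setIntegral_congr_fun hmeas hfiber, integral_const_mul,
    integral_sub hf.integrableOn (integrable_const _), setIntegral_const, smul_eq_mul,
    ← setIntegral_eq_measureReal_mul_cexp, sub_self, mul_zero]

theorem integral_comp_mul_eq_integral_comp_mul_cexpGiven (hZ : Measurable Z)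
    (hZfin : (Set.range Z).Finite) {f : Ω → ℝ} (hf : Integrable f μ) (a : α → ℝ) :
    ∫ ω, a (Z ω) * f ω ∂μ = ∫ ω, a (Z ω) * cexpGiven μ f Z ω ∂μ := by
  have hint : Integrable (fun ω => a (Z ω) * cexpGiven μ f Z ω) μ :=
    integrable_comp_of_finite_range hZ hZfin fun z => a z * cexp μ f {ω | Z ω = z}
  rw [← sub_eq_zero, ← integral_sub (hf.comp_mul_of_finite_range hZ hZfin a) hint]
  simpa only [mul_sub] using integral_comp_mul_sub_cexpGiven hZ hZfin hf a

end FiniteRange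

section Panel

variable {Ω 𝒳 : Type*} [MeasurableSpace Ω] {μ : Measure Ω}

theorem setIntegral_ite_eq_measureReal {D : Ω → Bool} (hD : Measurable D) (s : Set Ω) :
    ∫ ω in s, (if D ω then (1 : ℝ) else 0) ∂μ = μ.real ({ω | D ω = true} ∩ s) := by
  have hind : (fun ω => if D ω then (1 : ℝ) else 0) = {ω | D ω = true}.indicator 1 := by
    ext ω
    simp [Set.indicator_apply]
  have hDmeas : MeasurableSet {ω | D ω = true} := hD (measurableSet_singleton true)
  rw [hind, integral_indicator_one hDmeas, measureReal_restrict_apply hDmeas]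

theorem cexpGiven_ite_eq_pDx {D : Ω → Bool} (hD : Measurable D) (X : Ω → 𝒳) (ω : Ω) :
    cexpGiven μ (fun ω => if D ω then (1 : ℝ) else 0) X ω = pDx μ D X (X ω) := by
  rw [cexpGiven, cexp, pDx, setIntegral_ite_eq_measureReal hD, measureReal_def]
  rfl

theorem integral_comp_mul_ite_eq_integral_comp_mul_pDx [IsFiniteMeasure μ] [MeasurableSpace 𝒳]
    [MeasurableSingletonClass 𝒳] {D : Ω → Bool} {X : Ω → 𝒳} (hD : Measurable D)
    (hX : Measurable X) (hXfin : (Set.range X).Finite) (g : 𝒳 → ℝ) :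
    ∫ ω, g (X ω) * (if D ω then 1 else 0) ∂μ = ∫ ω, g (X ω) * pDx μ D X (X ω) ∂μ := by
  rw [integral_comp_mul_eq_integral_comp_mul_cexpGiven hX hXfin
    (integrable_comp_of_finite_range hD (Set.toFinite _) fun d => if d then 1 else 0) g]
  simp_rw [cexpGiven_ite_eq_pDx hD]

theorem cexpGiven_prodMk_eq_mDY (Y0 Y1 : Ω → ℝ) (D : Ω → Bool) (X : Ω → 𝒳) (ω : Ω) :
    cexpGiven μ (fun ω => Y1 ω - Y0 ω) (fun ω => (D ω, X ω)) ω = mDY μ Y0 Y1 D X (D ω) (X ω) := by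
  simp only [cexpGiven, mDY, Prod.mk.injEq]

end Panel

theorem panel_eif_mean_zero_general
    {Ω 𝒳 : Type*} [MeasurableSpace Ω] [MeasurableSpace 𝒳] [MeasurableSingletonClass 𝒳]
    (μ : Measure Ω) [IsProbabilityMeasure μ]
    (Y0 Y1 : Ω → ℝ) (D : Ω → Bool) (X : Ω → 𝒳)
    (hD : Measurable D) (hX : Measurable X)
    (hXfin : (Set.range X).Finite)
    (hΔint : Integrable (fun ω => Y1 ω - Y0 ω) μ)
    -- p_D = Pr(D=1) > 0
    (pD : ℝ) (hpD : pD = (μ {ω | D ω = true}).toReal) (hpDpos : 0 < pD)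
    (θ : ℝ)
    (hθ : θ = (∫ ω, (mDY μ Y0 Y1 D X true (X ω) - mDY μ Y0 Y1 D X false (X ω))
                * pDx μ D X (X ω) ∂μ) / pD) :
    ∫ ω,
        (pDx μ D X (X ω) / pD)
          * ((if D ω then (1:ℝ) else 0) / pDx μ D X (X ω)
              * (Y1 ω - Y0 ω - mDY μ Y0 Y1 D X true (X ω))
            - (if D ω then (0:ℝ) else 1) / (1 - pDx μ D X (X ω))
              * (Y1 ω - Y0 ω - mDY μ Y0 Y1 D X false (X ω)))
        + ((if D ω then (1:ℝ) else 0) / pD)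
            * ((mDY μ Y0 Y1 D X true (X ω) - mDY μ Y0 Y1 D X false (X ω)) - θ) ∂μ = 0 := by
  set a : Bool × 𝒳 → ℝ := fun z => pDx μ D X z.2 / pD
    * ((if z.1 then 1 else 0) / pDx μ D X z.2 - (if z.1 then 0 else 1) / (1 - pDx μ D X z.2))
  have hZ : Measurable fun ω => (D ω, X ω) := hD.prodMk hX
  have hZfin : (Set.range fun ω => (D ω, X ω)).Finite :=
    ((Set.toFinite (Set.range D)).prod hXfin).subset (Set.range_pair_subset D X)
  have htreated : Integrable (fun ω => if D ω then (1 : ℝ) else 0) μ :=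
    integrable_comp_of_finite_range hD (Set.toFinite _) fun d => if d then 1 else 0
  have hτ : ∫ ω, (mDY μ Y0 Y1 D X true (X ω) - mDY μ Y0 Y1 D X false (X ω))
      * (if D ω then 1 else 0) ∂μ = θ * pD := by
    rw [integral_comp_mul_ite_eq_integral_comp_mul_pDx hD hX hXfin
      fun x => mDY μ Y0 Y1 D X true x - mDY μ Y0 Y1 D X false x, hθ]
    field_simp
  have hpD' : ∫ ω, (if D ω then (1 : ℝ) else 0) ∂μ = pD := by
    rw [← setIntegral_univ, setIntegral_ite_eq_measureReal hD, Set.inter_univ, hpD,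
      measureReal_def]
  calc _ = ∫ ω, a (D ω, X ω)
          * (Y1 ω - Y0 ω - cexpGiven μ (fun ω => Y1 ω - Y0 ω) (fun ω => (D ω, X ω)) ω)
        + ((mDY μ Y0 Y1 D X true (X ω) - mDY μ Y0 Y1 D X false (X ω)) * (if D ω then 1 else 0)
          - θ * (if D ω then 1 else 0)) / pD ∂μ := by
        refine integral_congr_ae (.of_forall fun ω => ?_)
        simp only [cexpGiven_prodMk_eq_mDY, a]
        cases D ω <;> simp <;> ring
    _ = 0 := by
      have hτint := htreated.comp_mul_of_finite_range hX hXfin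
        fun x => mDY μ Y0 Y1 D X true x - mDY μ Y0 Y1 D X false x
      rw [integral_add ((hΔint.sub_cexpGiven hZ hZfin).comp_mul_of_finite_range hZ hZfin a)
          ((hτint.sub' (htreated.const_mul θ)).div_const pD),
        integral_comp_mul_sub_cexpGiven hZ hZfin hΔint a, integral_div,
        integral_sub hτint (htreated.const_mul θ), integral_const_mul, hτ, hpD']
      ring

/-- The panel efficient influence function has mean zero, where
`θ = E[m_{ΔY}(X) p_D(X)] / p_D` with `m_{ΔY}(x) = m_{ΔY}(1,x) - m_{ΔY}(0,x)`. -/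
theorem panel_eif_mean_zero
    {Ω 𝒳 : Type*} [MeasurableSpace Ω] [MeasurableSpace 𝒳] [MeasurableSingletonClass 𝒳]
    (μ : Measure Ω) [IsProbabilityMeasure μ]
    (Y0 Y1 : Ω → ℝ) (D : Ω → Bool) (X : Ω → 𝒳)
    (hD : Measurable D) (hX : Measurable X)
    (hXfin : (Set.range X).Finite)
    (hΔint : Integrable (fun ω => Y1 ω - Y0 ω) μ)
    -- common support: p_D(x) ∈ (0,1) on the support of X
    (hCS : ∀ x, 0 < μ {ω | X ω = x} →
      0 < μ {ω | D ω = true ∧ X ω = x} ∧ 0 < μ {ω | D ω = false ∧ X ω = x})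
    -- p_D = Pr(D=1) > 0
    (pD : ℝ) (hpD : pD = (μ {ω | D ω = true}).toReal) (hpDpos : 0 < pD)
    (θ : ℝ)
    (hθ : θ = (∫ ω, (mDY μ Y0 Y1 D X true (X ω) - mDY μ Y0 Y1 D X false (X ω))
                * pDx μ D X (X ω) ∂μ) / pD) :
    ∫ ω,
        (pDx μ D X (X ω) / pD)
          * ((if D ω then (1:ℝ) else 0) / pDx μ D X (X ω)
              * (Y1 ω - Y0 ω - mDY μ Y0 Y1 D X true (X ω))
            - (if D ω then (0:ℝ) else 1) / (1 - pDx μ D X (X ω))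
              * (Y1 ω - Y0 ω - mDY μ Y0 Y1 D X false (X ω)))
        + ((if D ω then (1:ℝ) else 0) / pD)
            * ((mDY μ Y0 Y1 D X true (X ω) - mDY μ Y0 Y1 D X false (X ω)) - θ) ∂μ = 0 :=
  panel_eif_mean_zero_general μ Y0 Y1 D X hD hX hXfin hΔint pD hpD hpDpos θ hθ
end

section
/- Under the strong stationarity assumption (D,X) ⊥ T with T binary, the conditional second moment of the adjustment term D/p_D satisfies E[ (D/p_D)^2 | X ] = p_D(X)/p_D^2, and the excess over the CS-1 bound term is E[ (p_D(X)^2/p_D^2)(m(X)-theta)^2 (1/p_D(X)) (1/p_T - 1) ] >= 0, which is strictly positive whenever p_T < 1 and (m(X)-theta)^2 has positive expectation. -/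
open MeasureTheory ProbabilityTheory

/-!
Since `D² = D`, the square of `D / p_D` is the indicator of `{D = 1}` scaled by `1 / p_D²`, so its
mean over `{X = x}` is `p_D(x) / p_D²`. In the excess term `p_D(X)² · (1 / p_D(X))` collapses to
`p_D(X)` (also where `p_D(X) = 0`), leaving the constant `(1 / p_T - 1) / p_D² ≥ 0` times
`E[p_D(X) (m(X) - θ)²]`. As `X` has countable range, almost every `ω` lies in a fibre of positive
mass, where `p_D(X ω) > 0`; so `p_D(X) (m(X) - θ)²` and `(m(X) - θ)²` vanish on the same set up to
a null set, and their integrals are positive together.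
-/

section

variable {Ω 𝒳 : Type*} [MeasurableSpace Ω] {μ : Measure Ω}

theorem ae_measure_fiber_ne_zero {X : Ω → 𝒳} (hX : (Set.range X).Countable) :
    ∀ᵐ ω ∂μ, μ {ω' | X ω' = X ω} ≠ 0 := by
  rw [ae_iff]
  refine measure_mono_null (t := ⋃ x ∈ {x ∈ Set.range X | μ {ω | X ω = x} = 0}, {ω | X ω = x})
    ?_ ((measure_biUnion_null_iff (hX.mono (Set.sep_subset _ _))).2 fun x hx => hx.2)
  intro ω hω
  simp only [not_not, Set.mem_ofPred_eq] at hω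
  exact Set.mem_biUnion ⟨Set.mem_range_self ω, hω⟩ rfl

theorem Measurable.comp_of_countable_range [MeasurableSpace 𝒳] [MeasurableSingletonClass 𝒳]
    {β : Type*} [MeasurableSpace β] {X : Ω → 𝒳} (hX : Measurable X)
    (hXc : (Set.range X).Countable) (g : 𝒳 → β) : Measurable fun ω => g (X ω) :=
  have : Countable (Set.range X) := hXc.to_subtype
  (Measurable.of_discrete (f := fun x : Set.range X => g x)).comp
    (hX.subtype_mk (h := Set.mem_range_self))

theorem cexp_indicator_const {E : Set Ω} (hE : MeasurableSet E) (A : Set Ω) (c : ℝ) :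
    cexp μ (E.indicator fun _ => c) A = (μ (E ∩ A)).toReal / (μ A).toReal * c := by
  rw [cexp, integral_indicator_const c hE, measureReal_restrict_apply hE, measureReal_def,
    smul_eq_mul]
  ring

theorem integral_mul_pos_of_ae_pos {w g : Ω → ℝ} (hw : ∀ᵐ ω ∂μ, 0 < w ω) (hg : 0 ≤ᵐ[μ] g)
    (hgi : Integrable g μ) (hwg : Integrable (fun ω => w ω * g ω) μ)
    (h : 0 < ∫ ω, g ω ∂μ) : 0 < ∫ ω, w ω * g ω ∂μ := by
  have hwg_nonneg : 0 ≤ᵐ[μ] fun ω => w ω * g ω := by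
    filter_upwards [hw, hg] with ω hwω hgω using mul_nonneg hwω.le hgω
  rw [integral_pos_iff_support_of_nonneg_ae hg hgi] at h
  rw [integral_pos_iff_support_of_nonneg_ae hwg_nonneg hwg]
  have hsupp : Function.support (fun ω => w ω * g ω) =ᵐ[μ] Function.support g := by
    refine Filter.eventuallyEq_set.2 ?_
    filter_upwards [hw] with ω hwω
    simp [Function.mem_support, hwω.ne']
  rwa [measure_congr hsupp]

theorem cexp_sq_indicator_div_eq_pDx {D : Ω → Bool} (hD : Measurable D) (X : Ω → 𝒳) (pD : ℝ)
    (x : 𝒳) :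
    cexp μ (fun ω => ((if D ω then (1:ℝ) else 0) / pD) ^ 2) {ω | X ω = x}
      = pDx μ D X x / pD ^ 2 := by
  have hsq : (fun ω => ((if D ω then (1:ℝ) else 0) / pD) ^ 2)
      = {ω | D ω = true}.indicator fun _ => 1 / pD ^ 2 := by
    funext ω; by_cases h : D ω <;> simp [h]
  rw [hsq, cexp_indicator_const (E := {ω | D ω = true}) (hD (measurableSet_singleton true)),
    pDx, Set.ofPred_and]
  ring

end

theorem strong_stationarity_adjustment_general
    {Ω 𝒳 : Type*} [MeasurableSpace Ω] [MeasurableSpace 𝒳] [MeasurableSingletonClass 𝒳]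
    (μ : Measure Ω)
    (D : Ω → Bool) (X : Ω → 𝒳)
    (hD : Measurable D) (hX : Measurable X)
    (hXfin : (Set.range X).Finite)
    -- p_D(x) ∈ (0,1) on the support of X
    (hpDx : ∀ x, 0 < μ {ω | X ω = x} → 0 < pDx μ D X x ∧ pDx μ D X x < 1)
    (pD : ℝ) (hpDpos : 0 < pD)
    (pT : ℝ) (hpT0 : 0 < pT) (hpT1 : pT < 1)
    (m : 𝒳 → ℝ) (θ : ℝ)
    (hm2 : Integrable (fun ω => (m (X ω) - θ) ^ 2) μ) :
    (∀ x, 0 < μ {ω | X ω = x} →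
      cexp μ (fun ω => ((if D ω then (1:ℝ) else 0) / pD) ^ 2) {ω | X ω = x}
        = pDx μ D X x / pD ^ 2)
    ∧ 0 ≤ ∫ ω, (pDx μ D X (X ω) ^ 2 / pD ^ 2) * (m (X ω) - θ) ^ 2
            * (1 / pDx μ D X (X ω)) * (1 / pT - 1) ∂μ
    ∧ (pT < 1 → 0 < ∫ ω, (m (X ω) - θ) ^ 2 ∂μ →
        0 < ∫ ω, (pDx μ D X (X ω) ^ 2 / pD ^ 2) * (m (X ω) - θ) ^ 2
              * (1 / pDx μ D X (X ω)) * (1 / pT - 1) ∂μ) := by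
  have hpDx_ae : ∀ᵐ ω ∂μ, 0 < pDx μ D X (X ω) ∧ pDx μ D X (X ω) < 1 :=
    (ae_measure_fiber_ne_zero hXfin.countable).mono fun ω hω => hpDx _ (pos_iff_ne_zero.2 hω)
  have hweighted : Integrable (fun ω => pDx μ D X (X ω) * (m (X ω) - θ) ^ 2) μ :=
    hm2.bdd_mul (hX.comp_of_countable_range hXfin.countable _).aestronglyMeasurable <|
      hpDx_ae.mono fun ω hω => by rw [Real.norm_eq_abs, abs_of_pos hω.1]; exact hω.2.le
  have hintegrand : ∀ a s : ℝ, a ^ 2 / pD ^ 2 * s * (1 / a) * (1 / pT - 1)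
      = (1 / pT - 1) / pD ^ 2 * (a * s) := fun a s => by
    have ha : a ^ 2 * (1 / a) = a := by rw [sq, one_div, mul_self_mul_inv]
    linear_combination (1 / pT - 1) / pD ^ 2 * s * ha
  simp_rw [hintegrand, integral_const_mul]
  refine ⟨fun x _ => cexp_sq_indicator_div_eq_pDx hD X pD x, ?_, fun _ hpos => ?_⟩
  · refine mul_nonneg (div_nonneg (sub_nonneg.2 (one_le_one_div hpT0 hpT1.le)) (sq_nonneg pD)) ?_
    exact integral_nonneg_of_ae <| hpDx_ae.mono fun ω hω => mul_nonneg hω.1.le (sq_nonneg _)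
  · refine mul_pos (div_pos (sub_pos.2 (one_lt_one_div hpT0 hpT1)) (pow_pos hpDpos 2)) ?_
    exact integral_mul_pos_of_ae_pos (hpDx_ae.mono fun ω hω => hω.1)
      (Filter.Eventually.of_forall fun ω => sq_nonneg _) hm2 hweighted hpos

/-- Under strong stationarity `(D,X) ⟂ T`, `E[(D/p_D)² | X] = p_D(X)/p_D²`,
and the excess over the CS-1 bound term
`E[(p_D(X)²/p_D²)(m(X)-θ)² (1/p_D(X)) (1/p_T - 1)]` is nonnegative, and strictly positive
whenever `p_T < 1` and `(m(X)-θ)²` has positive expectation. -/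
theorem strong_stationarity_adjustment
    {Ω 𝒳 : Type*} [MeasurableSpace Ω] [MeasurableSpace 𝒳] [MeasurableSingletonClass 𝒳]
    (μ : Measure Ω) [IsProbabilityMeasure μ]
    (D T : Ω → Bool) (X : Ω → 𝒳)
    (hD : Measurable D) (hT : Measurable T) (hX : Measurable X)
    (hXfin : (Set.range X).Finite)
    -- strong stationarity: (D, X) ⟂ T
    (hIndep : IndepFun (fun ω => (D ω, X ω)) T μ)
    -- p_D(x) ∈ (0,1) on the support of X
    (hpDx : ∀ x, 0 < μ {ω | X ω = x} → 0 < pDx μ D X x ∧ pDx μ D X x < 1)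
    (pD : ℝ) (hpD : pD = (μ {ω | D ω = true}).toReal) (hpDpos : 0 < pD)
    (pT : ℝ) (hpT : pT = (μ {ω | T ω = true}).toReal) (hpT0 : 0 < pT) (hpT1 : pT < 1)
    (m : 𝒳 → ℝ) (θ : ℝ)
    (hm2 : Integrable (fun ω => (m (X ω) - θ) ^ 2) μ) :
    (∀ x, 0 < μ {ω | X ω = x} →
      cexp μ (fun ω => ((if D ω then (1:ℝ) else 0) / pD) ^ 2) {ω | X ω = x}
        = pDx μ D X x / pD ^ 2)
    ∧ 0 ≤ ∫ ω, (pDx μ D X (X ω) ^ 2 / pD ^ 2) * (m (X ω) - θ) ^ 2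
            * (1 / pDx μ D X (X ω)) * (1 / pT - 1) ∂μ
    ∧ (pT < 1 → 0 < ∫ ω, (m (X ω) - θ) ^ 2 ∂μ →
        0 < ∫ ω, (pDx μ D X (X ω) ^ 2 / pD ^ 2) * (m (X ω) - θ) ^ 2
              * (1 / pDx μ D X (X ω)) * (1 / pT - 1) ∂μ) :=
  strong_stationarity_adjustment_general μ D X hD hX hXfin hpDx pD hpDpos pT hpT0 hpT1 m θ hm2
end
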